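/- arXiv:1910.01251 — 2 statements merged into one kernel-verified Lean document; each statement's English description precedes it below -/
import Mathlib

section
/- Let n ≥ 1. Every torus-invariant polynomial p ∈ MvPolynomial (Fin n × Fin n × Fin n) ℂ that is homogeneous of degree n lies in the ℂ-linear span of the maximum 3-dimensional matching monomials ∏ i, X_{(i, σ i, τ i)}, where σ, τ range over permutations of Fin n. -/
/-!
Torus invariance forces every monomial `d` of `p` to have weight one under each scaling: the
weight of `d` under `a` (with `b = c = 1`) is `∏ i, a i ^ r i` for the row marginal `r` of `d`,
and testing `a = (g at i, g⁻¹ at j)` for `g` of infinite order shows that `r` is constant, hence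
identically `1` because `deg d = n`. So each of the three marginals of the multiset of triples
of `d` is every index exactly once, which says that `d` is the exponent of a matching monomial.
-/

open MvPolynomial

/-- The scaling substitution `S_{a,b,c}`: the `ℂ`-algebra endomorphism of
`MvPolynomial (Fin n × Fin n × Fin n) ℂ` determined by
`X (i,j,k) ↦ (a i * b j * c k) • X (i,j,k)`. -/
noncomputable def scaleSub {n : ℕ} (a b c : Fin n → ℂˣ) :
    MvPolynomial (Fin n × Fin n × Fin n) ℂ →ₐ[ℂ] MvPolynomial (Fin n × Fin n × Fin n) ℂ :=
  aeval fun v : Fin n × Fin n × Fin n =>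
    (((a v.1 : ℂ) * (b v.2.1 : ℂ) * (c v.2.2 : ℂ))) • X v

/-- A polynomial is torus-invariant if it is fixed by all scaling substitutions `S_{a,b,c}`
with `∏ a = ∏ b = ∏ c = 1`; this encodes the natural action of
`ST_n(ℂ) × ST_n(ℂ) × ST_n(ℂ)` on `ℂ^n ⊗ ℂ^n ⊗ ℂ^n`. -/
def TorusInvariant {n : ℕ} (p : MvPolynomial (Fin n × Fin n × Fin n) ℂ) : Prop :=
  ∀ a b c : Fin n → ℂˣ,
    (∏ i, a i) = 1 → (∏ j, b j) = 1 → (∏ k, c k) = 1 → scaleSub a b c p = p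

namespace MvPolynomial

variable {R σ : Type*} [CommSemiring R]

theorem aeval_smul_X_monomial (u : σ → R) (d : σ →₀ ℕ) (r : R) :
    aeval (fun v => u v • X v) (monomial d r) = monomial d (r * d.prod fun v e => u v ^ e) := by
  rw [aeval_monomial, monomial_eq]
  simp only [Finsupp.prod, smul_eq_C_mul, mul_pow, Finset.prod_mul_distrib, algebraMap_eq, C_mul,
    map_prod, map_pow, mul_assoc]

theorem coeff_aeval_smul_X (u : σ → R) (p : MvPolynomial σ R) (d : σ →₀ ℕ) :
    coeff d (aeval (fun v => u v • X v) p) = (d.prod fun v e => u v ^ e) * coeff d p := by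
  classical
  induction p using MvPolynomial.induction_on' with
  | monomial d' r =>
    rw [aeval_smul_X_monomial, coeff_monomial, coeff_monomial]
    split_ifs with h
    · rw [h, mul_comm]
    · rw [mul_zero]
  | add p q hp hq => rw [map_add, coeff_add, coeff_add, hp, hq, mul_add]

theorem monomial_eq_smul_prod_X {ι : Type*} [Fintype ι] {d : σ →₀ ℕ} {g : ι → σ}
    (h : d.toMultiset = Finset.univ.val.map g) (r : R) :
    monomial d r = r • ∏ i, X (g i) := by
  have hd : d = ∑ i, Finsupp.single (g i) 1 := by
    classical
    apply (Finsupp.orderIsoMultiset (ι := σ)).injective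
    simp only [Finsupp.coe_orderIsoMultiset, h, map_sum, Finsupp.toMultiset_single, one_nsmul]
    rw [← Multiset.sum_map_singleton (Finset.univ.val.map g), Multiset.map_map]
    rfl
  rw [hd, monomial_sum_index, C_mul']
  rfl

end MvPolynomial

theorem eq_of_forall_prod_pow_eq_one {G ι : Type*} [CommGroup G] [Fintype ι] [DecidableEq ι]
    {g : G} (hg : ¬IsOfFinOrder g) {m : ι → ℕ}
    (h : ∀ a : ι → G, ∏ i, a i = 1 → ∏ i, a i ^ m i = 1) (i j : ι) : m i = m j := by
  have prod_mulSingle_pow (k : ι) (x : G) : ∏ l, Pi.mulSingle k x l ^ m l = x ^ m k := by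
    rw [Fintype.prod_eq_single k fun l hl => by simp [hl], Pi.mulSingle_eq_same]
  have := h (Pi.mulSingle i g * Pi.mulSingle j g⁻¹) (by simp [Finset.prod_mul_distrib])
  simp only [Pi.mul_apply, mul_pow, Finset.prod_mul_distrib, prod_mulSingle_pow, inv_pow,
    mul_inv_eq_one] at this
  exact injective_pow_iff_not_isOfFinOrder.mpr hg this

theorem Finsupp.map_toMultiset_eq_univ_of_prod_pow_eq_one {G ι α : Type*} [CommGroup G]
    [Fintype ι] [DecidableEq ι] {g : G} (hg : ¬IsOfFinOrder g) {d : α →₀ ℕ} (π : α → ι)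
    (hdeg : d.degree = Fintype.card ι)
    (h : ∀ a : ι → G, ∏ i, a i = 1 → (d.prod fun v e => a (π v) ^ e) = 1) :
    d.toMultiset.map π = Finset.univ.val := by
  set m := d.mapDomain π
  have hm (a : ι → G) (ha : ∏ i, a i = 1) : ∏ i, a i ^ m i = 1 := by
    rw [← Finsupp.prod_fintype m (fun i e => a i ^ e) fun _ => pow_zero _,
      Finsupp.prod_mapDomain_index (fun _ => pow_zero _) fun _ _ _ => pow_add _ _ _]
    exact h a ha
  have hsum : ∑ i, m i = Fintype.card ι := by
    rw [← Finsupp.degree_eq_sum, Finsupp.degree_mapDomain, hdeg]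
  have hone (i : ι) : m i = 1 := by
    have hconst : ∑ j, m j = Fintype.card ι * m i := by
      simp [Finset.sum_congr rfl fun j _ => eq_of_forall_prod_pow_eq_one hg hm j i]
    exact Nat.eq_of_mul_eq_mul_left (Fintype.card_pos_iff.mpr ⟨i⟩) (by rw [← hconst, hsum, mul_one])
  ext i
  rw [Finsupp.toMultiset_map, Finsupp.count_toMultiset, hone, Multiset.count_univ]

theorem Multiset.exists_eq_map_univ_graph {ι κ : Type*} [Fintype ι] {s : Multiset (ι × κ)}
    (h : s.map Prod.fst = Finset.univ.val) :
    ∃ f : ι → κ, s = Finset.univ.val.map fun i => (i, f i) := by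
  have hmem (i : ι) : ∃ k, (i, k) ∈ s := by
    obtain ⟨x, hx, rfl⟩ := Multiset.mem_map.mp (h ▸ Finset.mem_univ_val i)
    exact ⟨x.2, hx⟩
  choose f hf using hmem
  have hnodup : (Finset.univ.val.map fun i => (i, f i)).Nodup :=
    Finset.univ.nodup.map fun i j hij => congrArg Prod.fst hij
  refine ⟨f, (Multiset.eq_of_le_of_card_le ?_ ?_).symm⟩
  · rw [Multiset.le_iff_subset hnodup]
    intro x hx
    obtain ⟨i, -, rfl⟩ := Multiset.mem_map.mp hx
    exact hf i
  · rw [Multiset.card_map, ← h, Multiset.card_map]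

theorem Function.bijective_of_map_univ_val_eq {ι : Type*} [Fintype ι] {f : ι → ι}
    (h : Finset.univ.val.map f = Finset.univ.val) : f.Bijective := by
  refine Finite.injective_iff_bijective.mp fun i j hij => ?_
  exact (Multiset.nodup_map_iff_inj_on Finset.univ.nodup).mp (by rw [h]; exact Finset.univ.nodup)
    i (Finset.mem_univ_val i) j (Finset.mem_univ_val j) hij

theorem Multiset.exists_perm_eq_map_univ {ι : Type*} [Fintype ι] {s : Multiset (ι × ι × ι)}
    (h₁ : s.map Prod.fst = Finset.univ.val) (h₂ : s.map (·.2.1) = Finset.univ.val)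
    (h₃ : s.map (·.2.2) = Finset.univ.val) :
    ∃ σ τ : Equiv.Perm ι, s = Finset.univ.val.map fun i => (i, σ i, τ i) := by
  obtain ⟨f, rfl⟩ := Multiset.exists_eq_map_univ_graph h₁
  simp only [Multiset.map_map, Function.comp_def] at h₂ h₃
  exact ⟨Equiv.ofBijective _ (Function.bijective_of_map_univ_val_eq h₂),
    Equiv.ofBijective _ (Function.bijective_of_map_univ_val_eq h₃), rfl⟩

theorem Complex.not_isOfFinOrder_two : ¬IsOfFinOrder (Units.mk0 (2 : ℂ) two_ne_zero) := by
  rw [isOfFinOrder_iff_pow_eq_one]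
  rintro ⟨k, hk, h⟩
  have h2k : ((2 ^ k : ℕ) : ℂ) = (1 : ℕ) := by simpa [Units.ext_iff] using h
  have := Nat.cast_injective h2k
  simp only [Nat.pow_eq_one] at this
  omega

namespace TorusInvariant

variable {n : ℕ} {p : MvPolynomial (Fin n × Fin n × Fin n) ℂ} {d : Fin n × Fin n × Fin n →₀ ℕ}

theorem prod_pow_eq_one (hinv : TorusInvariant p) (hd : d ∈ p.support)
    {a b c : Fin n → ℂˣ} (ha : ∏ i, a i = 1) (hb : ∏ j, b j = 1) (hc : ∏ k, c k = 1) :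
    (d.prod fun v e => (a v.1 * b v.2.1 * c v.2.2) ^ e) = 1 := by
  have hcoeff := congrArg (coeff d) (hinv a b c ha hb hc)
  rw [scaleSub, coeff_aeval_smul_X] at hcoeff
  apply Units.val_injective
  simpa [Finsupp.prod, mem_support_iff.mp hd] using hcoeff

theorem map_toMultiset_eq_univ (hinv : TorusInvariant p) (hhom : p.IsHomogeneous n)
    (hd : d ∈ p.support) {π : Fin n × Fin n × Fin n → Fin n}
    (hπ : π = Prod.fst ∨ π = (·.2.1) ∨ π = (·.2.2)) :
    d.toMultiset.map π = Finset.univ.val := by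
  have hdeg : d.degree = Fintype.card (Fin n) := by
    rw [Fintype.card_fin, Finsupp.degree_eq_weight_one]
    exact hhom (mem_support_iff.mp hd)
  refine Finsupp.map_toMultiset_eq_univ_of_prod_pow_eq_one Complex.not_isOfFinOrder_two π hdeg
    fun a ha => ?_
  rcases hπ with rfl | rfl | rfl
  · simpa using hinv.prod_pow_eq_one hd ha (b := 1) (c := 1) (by simp) (by simp)
  · simpa using hinv.prod_pow_eq_one hd (a := 1) (c := 1) (by simp) ha (by simp)
  · simpa using hinv.prod_pow_eq_one hd (a := 1) (b := 1) (by simp) (by simp) ha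

end TorusInvariant

theorem invariant_homogeneous_degree_n_in_matching_span_general (n : ℕ)
    (p : MvPolynomial (Fin n × Fin n × Fin n) ℂ)
    (hinv : TorusInvariant p) (hhom : p.IsHomogeneous n) :
    p ∈ Submodule.span ℂ
      {q : MvPolynomial (Fin n × Fin n × Fin n) ℂ |
        ∃ σ τ : Equiv.Perm (Fin n), q = ∏ i : Fin n, X (i, σ i, τ i)} := by
  rw [p.as_sum]
  refine Submodule.sum_mem _ fun d hd => ?_
  obtain ⟨σ, τ, hστ⟩ := Multiset.exists_perm_eq_map_univ
    (hinv.map_toMultiset_eq_univ hhom hd (.inl rfl))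
    (hinv.map_toMultiset_eq_univ hhom hd (.inr (.inl rfl)))
    (hinv.map_toMultiset_eq_univ hhom hd (.inr (.inr rfl)))
  rw [monomial_eq_smul_prod_X hστ]
  exact Submodule.smul_mem _ _ (Submodule.subset_span ⟨σ, τ, rfl⟩)

/-- Every torus-invariant polynomial which is homogeneous of degree `n` lies in the
`ℂ`-linear span of the maximum 3-dimensional matching monomials. -/
theorem invariant_homogeneous_degree_n_in_matching_span (n : ℕ) (hn : 1 ≤ n)
    (p : MvPolynomial (Fin n × Fin n × Fin n) ℂ)
    (hinv : TorusInvariant p) (hhom : p.IsHomogeneous n) :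
    p ∈ Submodule.span ℂ
      {q : MvPolynomial (Fin n × Fin n × Fin n) ℂ |
        ∃ σ τ : Equiv.Perm (Fin n), q = ∏ i : Fin n, X (i, σ i, τ i)} :=
  invariant_homogeneous_degree_n_in_matching_span_general n p hinv hhom
end

section
/- Let n ≥ 1 and m ≥ 1. There exists a nonzero vector v ∈ ⊗^m ℂ^n that is SL_n(ℂ)-invariant if and only if n divides m. -/
/-!
Scalar matrices `ζ • 1` with `ζ ^ n = 1` lie in `SL_n(ℂ)` and act on `⊗^m ℂ^n` by `ζ ^ m`, so a
nonzero invariant forces `ζ ^ m = 1` for a primitive `n`-th root of unity `ζ`, i.e. `n ∣ m`.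
Conversely, the antisymmetrization `∑ σ, sign σ • e_{σ 1} ⊗ ⋯ ⊗ e_{σ n}` of the standard basis is
nonzero and is scaled by `det g` under `g`, and tensor powers of it give invariants in every
degree `n * k`.
-/

open PiTensorProduct TensorProduct

theorem Complex.dvd_of_forall_pow_eq_one {n m : ℕ} (h : ∀ ζ : ℂ, ζ ^ n = 1 → ζ ^ m = 1) :
    n ∣ m := by
  obtain ⟨ζ, hζ⟩ : ∃ ζ : ℂ, IsPrimitiveRoot ζ n := by
    rcases eq_or_ne n 0 with rfl | hn
    · -- no positive power of `0` is `1`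
      exact ⟨0, .zero⟩
    · exact ⟨_, Complex.isPrimitiveRoot_exp n hn⟩
  exact hζ.dvd_of_pow_eq_one m (h ζ hζ.pow_eq_one)

theorem TensorProduct.tmul_ne_zero {R M N : Type*} [CommRing R] [IsDomain R] [AddCommGroup M]
    [Module R M] [AddCommGroup N] [Module R N] [Module.IsTorsionFree R M]
    [Module.IsTorsionFree R N] {x : M} {y : N} (hx : x ≠ 0) (hy : y ≠ 0) : x ⊗ₜ[R] y ≠ 0 :=
  ((LinearIndependent.of_subsingleton (v := fun _ : Unit => x) () hx).tmul_of_isDomain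
    (LinearIndependent.of_subsingleton (v := fun _ : Unit => y) () hy)).ne_zero ((), ())

theorem PiTensorProduct.map_smul_id {ι R : Type*} [Fintype ι] [CommSemiring R] {s : ι → Type*}
    [∀ i, AddCommMonoid (s i)] [∀ i, Module R (s i)] (c : R) :
    map (fun i => c • (LinearMap.id : s i →ₗ[R] s i)) = c ^ Fintype.card ι • LinearMap.id := by
  ext x
  simp [MultilinearMap.map_smul_univ]

theorem pow_eq_one_of_invariant_tensorPower {ι K : Type*} [Fintype ι] [DecidableEq ι] [Field K]
    {m : ℕ} {v : ⨂[K]^m (ι → K)} (hv : v ≠ 0)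
    (hinv : ∀ g : Matrix.SpecialLinearGroup ι K,
      map (fun _ => Matrix.toLin' (g : Matrix ι ι K)) v = v)
    {ζ : K} (hζ : ζ ^ Fintype.card ι = 1) : ζ ^ m = 1 := by
  let g : Matrix.SpecialLinearGroup ι K :=
    ⟨ζ • 1, by rw [Matrix.det_smul, Matrix.det_one, hζ, one_mul]⟩
  have hg : Matrix.toLin' (g : Matrix ι ι K) = ζ • LinearMap.id := by
    rw [← Matrix.toLin'_one, ← map_smul]
  have := hinv g
  rw [hg, map_smul_id, Fintype.card_fin, LinearMap.smul_apply, LinearMap.id_apply] at this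
  exact smul_left_injective K hv (by simpa using this)

section DetTensor

variable {ι R M : Type*} [Fintype ι] [DecidableEq ι] [CommRing R] [AddCommGroup M] [Module R M]

noncomputable def Module.Basis.detTensor (b : Module.Basis ι R M) : ⨂[R] _ : ι, M :=
  MultilinearMap.alternatization (tprod R) b

namespace Module.Basis

variable (b : Module.Basis ι R M)

theorem alternatization_tprod_eq_det_smul (v : ι → M) :
    MultilinearMap.alternatization (tprod R) v = b.det v • b.detTensor := by
  have h : MultilinearMap.alternatization (tprod R) =
      (LinearMap.toSpanSingleton R _ b.detTensor).compAlternatingMap b.det := by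
    refine b.ext_alternating fun w hw => ?_
    let σ : Equiv.Perm ι := Equiv.ofBijective w (Finite.injective_iff_bijective.mp hw)
    change MultilinearMap.alternatization (tprod R) (b ∘ σ) =
      (LinearMap.toSpanSingleton R _ b.detTensor).compAlternatingMap b.det (b ∘ σ)
    rw [AlternatingMap.map_perm, AlternatingMap.map_perm]
    simp [detTensor, b.det_self]
  rw [h]
  rfl

theorem map_detTensor (f : M →ₗ[R] M) :
    map (fun _ => f) b.detTensor = LinearMap.det f • b.detTensor := by
  have : map (fun _ => f) b.detTensor = MultilinearMap.alternatization (tprod R) (f ∘ b) := by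
    simp [detTensor, MultilinearMap.alternatization_apply, map_sum, Units.smul_def, map_zsmul]
  rw [this, b.alternatization_tprod_eq_det_smul, b.det_comp, b.det_self, mul_one]

theorem detTensor_ne_zero [Nontrivial R] : b.detTensor ≠ 0 := by
  let φ : (⨂[R] _ : ι, M) →ₗ[R] R :=
    lift ((MultilinearMap.mkPiAlgebra R ι R).compLinearMap b.coord)
  have hφ (v : ι → M) : φ (MultilinearMap.alternatization (tprod R) v) = b.det v := by
    rw [det_apply, ← Matrix.det_transpose, Matrix.det_apply]
    simp [φ, MultilinearMap.alternatization_apply, map_sum, Units.smul_def, map_zsmul,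
      toMatrix_apply]
  intro h
  have := hφ b
  rw [← detTensor, h, map_zero, b.det_self] at this
  exact zero_ne_one this

end Module.Basis

end DetTensor

namespace TensorPower

theorem map_mulEquiv_tmul {R M : Type*} [CommSemiring R] [AddCommMonoid M] [Module R M]
    (f : M →ₗ[R] M) {a b : ℕ} (x : ⨂[R]^a M) (y : ⨂[R]^b M) :
    map (fun _ => f) (mulEquiv (x ⊗ₜ y)) =
      mulEquiv (map (fun _ => f) x ⊗ₜ[R] map (fun _ => f) y) := by
  suffices (map (fun _ => f)).comp (mulEquiv (R := R) (M := M) (n := a) (m := b)).toLinearMap =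
      mulEquiv.toLinearMap ∘ₗ TensorProduct.map (map fun _ => f) (map fun _ => f) from
    LinearMap.congr_fun this (x ⊗ₜ y)
  ext u v
  simp only [LinearMap.compMultilinearMap_apply, AlgebraTensorModule.curry_apply,
    LinearMap.restrictScalars_self, curry_apply, LinearMap.coe_comp, LinearEquiv.coe_coe,
    Function.comp_apply, ← gMul_def, tprod_mul_tprod, map_tprod, map_tmul]
  congr 1
  ext i
  refine Fin.addCases (fun i => ?_) (fun i => ?_) i <;> simp

theorem exists_ne_zero_forall_map_eq_self_mul {K M G : Type*} [Field K] [AddCommGroup M]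
    [Module K M] (ρ : G → M →ₗ[K] M) {a : ℕ} {x : ⨂[K]^a M} (hx : x ≠ 0)
    (hρx : ∀ g, map (fun _ => ρ g) x = x) (k : ℕ) :
    ∃ v : ⨂[K]^(a * k) M, v ≠ 0 ∧ ∀ g, map (fun _ => ρ g) v = v := by
  induction k with
  | zero =>
    rw [Nat.mul_zero]
    refine ⟨tprod K Fin.elim0, fun h => ?_, fun g => ?_⟩
    · simpa using congr_arg (isEmptyEquiv (Fin 0)) h
    · rw [map_tprod]
      congr 1
      exact Subsingleton.elim _ _
  | succ k ih =>
    obtain ⟨v, hv, hρv⟩ := ih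
    rw [Nat.mul_succ]
    refine ⟨mulEquiv (v ⊗ₜ x), by simpa using tmul_ne_zero hv hx, fun g => ?_⟩
    rw [map_mulEquiv_tmul, hρv, hρx]

end TensorPower

theorem exists_invariant_vector_iff_dvd_general (n m : ℕ) :
    (∃ v : PiTensorProduct ℂ (fun _ : Fin m => (Fin n → ℂ)),
      v ≠ 0 ∧
        ∀ g : Matrix.SpecialLinearGroup (Fin n) ℂ,
          PiTensorProduct.map
            (fun _ : Fin m => Matrix.toLin' (g : Matrix (Fin n) (Fin n) ℂ)) v = v)
      ↔ n ∣ m := by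
  constructor
  · rintro ⟨v, hv, hinv⟩
    refine Complex.dvd_of_forall_pow_eq_one fun ζ hζ => ?_
    exact pow_eq_one_of_invariant_tensorPower hv hinv (by rwa [Fintype.card_fin])
  · rintro ⟨k, rfl⟩
    let b := Pi.basisFun ℂ (Fin n)
    refine TensorPower.exists_ne_zero_forall_map_eq_self_mul
      (fun g : Matrix.SpecialLinearGroup (Fin n) ℂ => Matrix.toLin' (g : Matrix (Fin n) (Fin n) ℂ))
      b.detTensor_ne_zero (fun g => ?_) k
    rw [b.map_detTensor, LinearMap.det_toLin', g.prop, one_smul]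

/-- For `n, m ≥ 1`, there exists a nonzero `SL_n(ℂ)`-invariant vector in the `m`-fold tensor
power of `ℂ^n` if and only if `n` divides `m`. -/
theorem exists_invariant_vector_iff_dvd (n m : ℕ) (hn : 1 ≤ n) (hm : 1 ≤ m) :
    (∃ v : PiTensorProduct ℂ (fun _ : Fin m => (Fin n → ℂ)),
      v ≠ 0 ∧
        ∀ g : Matrix.SpecialLinearGroup (Fin n) ℂ,
          PiTensorProduct.map
            (fun _ : Fin m => Matrix.toLin' (g : Matrix (Fin n) (Fin n) ℂ)) v = v)
      ↔ n ∣ m :=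
  exists_invariant_vector_iff_dvd_general n m
end
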